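/- arXiv:0911.2342 — 7 statements merged into one kernel-verified Lean document; each statement's English description precedes it below -/
import Mathlib

section
/- Let f be a probability density on ℝ^d that is centrally symmetric about 0 (f(-y) = f(y) for almost all y), let G be a cumulative distribution function on ℝ satisfying G(-x) = 1 - G(x) for all x, and let w : ℝ^d → ℝ be an odd function (w(-y) = -w(y)). Then the function y ↦ 2 f(y) G(w(y)) is a probability density function on ℝ^d, i.e. it is nonnegative and integrates to 1. -/
open MeasureTheory ProbabilityTheory Set
open scoped ENNReal

/-- perturbation of a centrally symmetric density yields a density. -/
theorem stmt_0 {d : ℕ} (f : (Fin d → ℝ) → ℝ) (hf_meas : Measurable f)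
    (hf_nonneg : ∀ y, 0 ≤ f y)
    (hf_int : ∫ y, f y = 1)
    (hf_sym : ∀ᵐ y : (Fin d → ℝ), f (-y) = f y)
    (μ : Measure ℝ) [IsProbabilityMeasure μ]
    (G : ℝ → ℝ) (hG : ∀ x, G x = (μ (Iic x)).toReal)
    (hG_sym : ∀ x, G (-x) = 1 - G x)
    (w : (Fin d → ℝ) → ℝ) (hw : Measurable w)
    (hw_odd : ∀ y, w (-y) = -w y) :
    (∀ y, 0 ≤ 2 * f y * G (w y)) ∧ ∫ y, 2 * f y * G (w y) = 1 := by
  have hG_nonneg : ∀ x, 0 ≤ G x := fun x => by rw [hG]; exact ENNReal.toReal_nonneg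
  have hG_le : ∀ x, G x ≤ 1 := fun x => by
    rw [hG]
    calc (μ (Iic x)).toReal ≤ (1 : ℝ≥0∞).toReal :=
      ENNReal.toReal_mono ENNReal.one_ne_top prob_le_one
    _ = 1 := by simp
  have hG_mono : Monotone G := by
    intro a b hab
    rw [hG, hG]
    exact ENNReal.toReal_mono (measure_ne_top μ _) (measure_mono (Iic_subset_Iic.2 hab))
  have hG_meas : Measurable G := hG_mono.measurable
  have hf_i : Integrable f := integrable_of_integral_eq_one hf_int
  have h_int : Integrable (fun y => f y * G (w y)) := by
    refine hf_i.mono ((hf_meas.mul (hG_meas.comp hw)).aestronglyMeasurable) ?_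
    filter_upwards with y
    rw [Real.norm_eq_abs, Real.norm_eq_abs,
      abs_of_nonneg (mul_nonneg (hf_nonneg y) (hG_nonneg _)), abs_of_nonneg (hf_nonneg y)]
    calc f y * G (w y) ≤ f y * 1 := by
          exact mul_le_mul_of_nonneg_left (hG_le _) (hf_nonneg y)
      _ = f y := mul_one _
  have key : ∫ y, f y * G (w y) = 1 - ∫ y, f y * G (w y) := by
    conv_lhs => rw [← integral_neg_eq_self (fun y => f y * G (w y)) volume]
    have : ∫ y, f (-y) * G (w (-y)) = ∫ y, f y * (1 - G (w y)) := by
      apply integral_congr_ae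
      filter_upwards [hf_sym] with y hy
      rw [hy, hw_odd, hG_sym]
    rw [this]
    have : ∫ y, f y * (1 - G (w y)) = ∫ y, (f y - f y * G (w y)) := by
      congr 1; ext y; ring
    rw [this, integral_sub hf_i h_int, hf_int]
  constructor
  · intro y
    exact mul_nonneg (mul_nonneg (by norm_num) (hf_nonneg y)) (hG_nonneg _)
  · simp_rw [mul_assoc]
    rw [integral_const_mul]
    linarith
end

section
/- Let Y have a centrally symmetric density f on ℝ^d, let X be an independent real random variable with CDF G satisfying G(-x)=1-G(x), and let w be a measurable odd function on ℝ^d. Define Z = Y if X < w(Y) and Z = -Y if X ≥ w(Y). Then Z has density 2 f(z) G(w(z)). -/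
open MeasureTheory ProbabilityTheory

/-- stochastic representation of the perturbed density:
Z = Y if X < w(Y), Z = -Y otherwise, has density 2 f(z) G(w(z)). -/
theorem stmt_3 {Ω : Type*} [MeasureSpace Ω] [IsProbabilityMeasure (ℙ : Measure Ω)]
    {d : ℕ} (f : (Fin d → ℝ) → ℝ) (hf : Measurable f)
    (Y : Ω → (Fin d → ℝ)) (hY : Measurable Y)
    (hYdens : Measure.map Y ℙ = volume.withDensity (fun y => ENNReal.ofReal (f y)))
    (hfsym : ∀ y, f (-y) = f y)
    (X : Ω → ℝ) (hX : Measurable X)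
    (G : ℝ → ℝ) (hG : ∀ x, G x = (Measure.map X ℙ (Set.Iic x)).toReal)
    (hGcont : Continuous G) (hGsym : ∀ x, G (-x) = 1 - G x)
    (hindep : IndepFun X Y ℙ)
    (w : (Fin d → ℝ) → ℝ) (hw : Measurable w)
    (hodd : ∀ y, w (-y) = -w y) :
    Measure.map (fun ω => if X ω < w (Y ω) then Y ω else -Y ω) ℙ
      = volume.withDensity (fun z => ENNReal.ofReal (2 * f z * G (w z))) := by
  classical
  set μX := Measure.map X ℙ with hμX
  have hPX : IsProbabilityMeasure μX := Measure.isProbabilityMeasure_map hX.aemeasurable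
  have hPY : IsProbabilityMeasure (Measure.map Y ℙ) := Measure.isProbabilityMeasure_map hY.aemeasurable
  have hGnn : ∀ t, 0 ≤ G t := fun t => by rw [hG]; exact ENNReal.toReal_nonneg
  have hGle : ∀ t, G t ≤ 1 := fun t => by
    rw [hG]; exact ENNReal.toReal_le_of_le_ofReal zero_le_one (by simpa using prob_le_one)
  have hIic : ∀ t, μX (Set.Iic t) = ENNReal.ofReal (G t) := fun t => by
    rw [hG]; exact (ENNReal.ofReal_toReal (measure_ne_top _ _)).symm
  -- no atoms
  have hAtom : ∀ t, μX {t} = 0 := by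
    intro t
    have key : ∀ s ∈ Set.Iio t, μX {t} ≤ ENNReal.ofReal (G t - G s) := by
      intro s hs
      have h1 : μX {t} ≤ μX (Set.Iic t \ Set.Iic s) := by
        apply measure_mono
        intro x hx
        simp only [Set.mem_singleton_iff] at hx
        subst hx
        exact ⟨le_refl x, not_le.mpr (Set.mem_Iio.mp hs)⟩
      have h2 : μX (Set.Iic t \ Set.Iic s) = μX (Set.Iic t) - μX (Set.Iic s) :=
        measure_diff (Set.Iic_subset_Iic.mpr (le_of_lt hs))
          measurableSet_Iic.nullMeasurableSet (measure_ne_top _ _)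
      rw [h2, hIic, hIic, ← ENNReal.ofReal_sub _ (hGnn s)] at h1
      exact h1
    have hlim : Filter.Tendsto (fun s => ENNReal.ofReal (G t - G s))
        (nhdsWithin t (Set.Iio t)) (nhds 0) := by
      have h0 : Filter.Tendsto (fun s => G t - G s) (nhdsWithin t (Set.Iio t)) (nhds 0) := by
        have h1 := (Filter.Tendsto.sub (tendsto_const_nhds (x := G t))
          ((hGcont.tendsto t).mono_left (nhdsWithin_le_nhds (s := Set.Iio t))))
        simpa using h1
      simpa [Function.comp_def] using (ENNReal.continuous_ofReal.tendsto 0).comp h0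
    have hle : μX {t} ≤ 0 :=
      ge_of_tendsto hlim (Filter.eventually_iff_exists_mem.mpr
        ⟨Set.Iio t, self_mem_nhdsWithin, key⟩)
    exact le_antisymm hle zero_le
  have hIio : ∀ t, μX (Set.Iio t) = ENNReal.ofReal (G t) := by
    intro t
    have h := measure_union_le (μ := μX) (Set.Iio t) {t}
    rw [Set.Iio_union_right, hAtom, add_zero] at h
    rw [← hIic t]
    exact le_antisymm (measure_mono Set.Iio_subset_Iic_self) h
  have hIci : ∀ t, μX (Set.Ici t) = ENNReal.ofReal (G (-t)) := by
    intro t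
    have hc : μX (Set.Ici t) = 1 - μX (Set.Iio t) := by
      rw [← Set.compl_Iio, measure_compl measurableSet_Iio (measure_ne_top _ _), measure_univ]
    rw [hc, hIio, hGsym, ENNReal.ofReal_sub _ (hGnn t), ENNReal.ofReal_one]
  -- joint law and pushforward
  set g : ℝ × (Fin d → ℝ) → (Fin d → ℝ) := fun p => if p.1 < w p.2 then p.2 else -p.2 with hgdef
  have hg : Measurable g :=
    Measurable.ite (measurableSet_lt measurable_fst (hw.comp measurable_snd))
      measurable_snd measurable_snd.neg
  have hmap : Measure.map (fun ω => if X ω < w (Y ω) then Y ω else -Y ω) ℙ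
      = Measure.map g (μX.prod (Measure.map Y ℙ)) := by
    rw [← (indepFun_iff_map_prod_eq_prod_map_map hX.aemeasurable hY.aemeasurable).mp hindep,
      Measure.map_map hg (hX.prodMk hY)]
    rfl
  rw [hmap]
  ext s hs
  rw [Measure.map_apply hg hs, Measure.prod_apply_symm (hg hs), withDensity_apply _ hs]
  -- the slice measure
  have hslice : ∀ y : Fin d → ℝ, μX ((fun x => (x, y)) ⁻¹' (g ⁻¹' s))
      = (if y ∈ s then ENNReal.ofReal (G (w y)) else 0)
        + (if -y ∈ s then ENNReal.ofReal (G (-w y)) else 0) := by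
    intro y
    have hset : (fun x => (x, y)) ⁻¹' (g ⁻¹' s) = {x : ℝ | (if x < w y then y else -y) ∈ s} := rfl
    rw [hset]
    by_cases hy : y ∈ s <;> by_cases hy' : -y ∈ s <;>
      simp only [hy, hy', if_true, if_false]
    · have : {x : ℝ | (if x < w y then y else -y) ∈ s} = Set.univ := by
        ext x; by_cases hx : x < w y <;> simp [hx, hy, hy']
      rw [this, measure_univ, hGsym, ← ENNReal.ofReal_add (hGnn _) (by linarith [hGle (w y)])]
      have h1 : G (w y) + (1 - G (w y)) = 1 := by ring
      rw [h1, ENNReal.ofReal_one]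
    · have : {x : ℝ | (if x < w y then y else -y) ∈ s} = Set.Iio (w y) := by
        ext x; by_cases hx : x < w y <;> simp [hx, hy, hy']
      rw [this, hIio, add_zero]
    · have : {x : ℝ | (if x < w y then y else -y) ∈ s} = Set.Ici (w y) := by
        ext x
        by_cases hx : x < w y
        · simp [hx, hy, hy', Set.mem_Ici, not_le.mpr hx]
        · simp [hx, hy, hy', Set.mem_Ici, not_lt.mp hx]
      rw [this, hIci, zero_add]
    · have : {x : ℝ | (if x < w y then y else -y) ∈ s} = ∅ := by
        ext x; by_cases hx : x < w y <;> simp [hx, hy, hy']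
      rw [this, measure_empty, add_zero]
  rw [lintegral_congr hslice, hYdens]
  -- measurability of the two pieces
  have hmA : Measurable fun y : Fin d → ℝ =>
      (if y ∈ s then ENNReal.ofReal (G (w y)) else 0) :=
    Measurable.ite hs (ENNReal.measurable_ofReal.comp (hGcont.measurable.comp hw))
      measurable_const
  have hmB : Measurable fun y : Fin d → ℝ =>
      (if -y ∈ s then ENNReal.ofReal (G (-w y)) else 0) :=
    Measurable.ite (measurable_neg hs) (ENNReal.measurable_ofReal.comp
      (hGcont.measurable.comp hw.neg)) measurable_const
  rw [lintegral_withDensity_eq_lintegral_mul volume (hf.ennreal_ofReal)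
    (show Measurable fun y : Fin d → ℝ => (if y ∈ s then ENNReal.ofReal (G (w y)) else 0)
      + (if -y ∈ s then ENNReal.ofReal (G (-w y)) else 0) from hmA.add hmB)]
  have hsplit : (fun y => ((fun y => ENNReal.ofReal (f y)) *
      fun y => (if y ∈ s then ENNReal.ofReal (G (w y)) else 0)
        + (if -y ∈ s then ENNReal.ofReal (G (-w y)) else 0)) y)
      = fun y => ENNReal.ofReal (f y) * (if y ∈ s then ENNReal.ofReal (G (w y)) else 0)
        + ENNReal.ofReal (f y) * (if -y ∈ s then ENNReal.ofReal (G (-w y)) else 0) := by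
    funext y; simp [mul_add]
  rw [hsplit, lintegral_add_left (show Measurable fun y : Fin d → ℝ => ENNReal.ofReal (f y) * (if y ∈ s then ENNReal.ofReal (G (w y)) else 0) from (hf.ennreal_ofReal).mul hmA)]
  -- the second integral equals the first, by the substitution y ↦ -y
  have hB : (∫⁻ y, ENNReal.ofReal (f y) * (if -y ∈ s then ENNReal.ofReal (G (-w y)) else 0))
      = ∫⁻ y, ENNReal.ofReal (f y) * (if y ∈ s then ENNReal.ofReal (G (w y)) else 0) := by
    have hpres := (Measure.measurePreserving_neg (volume : Measure (Fin d → ℝ))).lintegral_comp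
      (f := fun y => ENNReal.ofReal (f y) * (if -y ∈ s then ENNReal.ofReal (G (-w y)) else 0))
      ((hf.ennreal_ofReal).mul hmB)
    rw [← hpres]
    apply lintegral_congr
    intro y
    simp only [hfsym, hodd, neg_neg]
  rw [hB]
  -- identify with the target integral
  rw [← lintegral_indicator hs]
  have hpt : ∀ z, Set.indicator s (fun z => ENNReal.ofReal (2 * f z * G (w z))) z
      = ENNReal.ofReal (f z) * (if z ∈ s then ENNReal.ofReal (G (w z)) else 0)
        + ENNReal.ofReal (f z) * (if z ∈ s then ENNReal.ofReal (G (w z)) else 0) := by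
    intro z
    by_cases hz : z ∈ s
    · rw [Set.indicator_of_mem hz, if_pos hz, ← two_mul]
      rcases le_or_gt 0 (f z) with hfz | hfz
      · rw [show (2 : ℝ) * f z * G (w z) = f z * G (w z) * 2 by ring,
          ENNReal.ofReal_mul (mul_nonneg hfz (hGnn _)), ENNReal.ofReal_mul hfz,
          ENNReal.ofReal_ofNat]
        ring
      · rw [ENNReal.ofReal_of_nonpos (by nlinarith [hGnn (w z)]),
          ENNReal.ofReal_of_nonpos (le_of_lt hfz)]
        simp
    · rw [Set.indicator_of_notMem hz, if_neg hz]
      simp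
  rw [lintegral_congr hpt]
  exact (lintegral_add_left (show Measurable fun y : Fin d → ℝ => ENNReal.ofReal (f y) * (if y ∈ s then ENNReal.ofReal (G (w y)) else 0) from (hf.ennreal_ofReal).mul hmA) _).symm
end

section
/- With Y having density f centrally symmetric about 0 and Z having density 2 f(z) G(w(z)) (with G, w as in the perturbation lemma), for any measurable function t : ℝ^d → ℝ^k satisfying t(-y) = t(y) for all y, one has t(Y) =ᵈ t(Z). -/
open MeasureTheory ProbabilityTheory

/-- an even function t has the same distribution under the symmetric
density f and under the perturbed density 2 f(z) G(w(z)). -/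
theorem stmt_4 {d k : ℕ}
    (f : (Fin d → ℝ) → ℝ) (hf : Measurable f) (hf_nonneg : ∀ y, 0 ≤ f y)
    (hf_int : ∫ y, f y = 1) (hfsym : ∀ y, f (-y) = f y)
    (μ : Measure ℝ) [IsProbabilityMeasure μ]
    (G : ℝ → ℝ) (hG : ∀ x, G x = (μ (Set.Iic x)).toReal)
    (hGsym : ∀ x, G (-x) = 1 - G x)
    (w : (Fin d → ℝ) → ℝ) (hw : Measurable w) (hodd : ∀ y, w (-y) = -w y)
    (t : (Fin d → ℝ) → (Fin k → ℝ)) (ht : Measurable t)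
    (hteven : ∀ y, t (-y) = t y) :
    Measure.map t (volume.withDensity (fun y => ENNReal.ofReal (f y)))
      = Measure.map t (volume.withDensity (fun z => ENNReal.ofReal (2 * f z * G (w z)))) := by
  have hGmono : Monotone G := by
    intro a b hab
    rw [hG a, hG b]
    exact ENNReal.toReal_mono (measure_ne_top μ _) (measure_mono (Set.Iic_subset_Iic.mpr hab))
  have hGmeas : Measurable G := hGmono.measurable
  have hG0 : ∀ x, 0 ≤ G x := fun x => (hG x) ▸ ENNReal.toReal_nonneg
  have hG1 : ∀ x, G x ≤ 1 := by
    intro x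
    rw [hG x]
    have := prob_le_one (μ := μ) (s := Set.Iic x)
    calc (μ (Set.Iic x)).toReal ≤ (1 : ENNReal).toReal :=
          ENNReal.toReal_mono ENNReal.one_ne_top this
      _ = 1 := by simp
  ext S hS
  rw [Measure.map_apply ht hS, Measure.map_apply ht hS,
    withDensity_apply _ (ht hS), withDensity_apply _ (ht hS)]
  set T : Set (Fin d → ℝ) := t ⁻¹' S with hTdef
  have hT : MeasurableSet T := ht hS
  have hTneg : Neg.neg ⁻¹' T = T := by
    ext x
    simp only [Set.mem_preimage, hTdef, hteven]
  -- negation is measure preserving on volume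
  have hmp : MeasurePreserving (fun x : Fin d → ℝ => -x) volume volume :=
    Measure.measurePreserving_neg _
  have hemb : MeasurableEmbedding (fun x : Fin d → ℝ => -x) :=
    (Homeomorph.neg (Fin d → ℝ)).measurableEmbedding
  set g : (Fin d → ℝ) → ENNReal := fun z => ENNReal.ofReal (2 * f z * G (w z)) with hgdef
  have hkey : ∫⁻ x in T, g x = ∫⁻ x in T, ENNReal.ofReal (2 * f x * (1 - G (w x))) := by
    have := hmp.setLIntegral_comp_preimage_emb hemb g T
    rw [hTneg] at this
    rw [← this]
    refine setLIntegral_congr_fun hT (fun x _ => ?_)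
    simp only [hgdef]
    rw [hfsym, hodd, hGsym]
  have hImeas : Measurable g := by
    apply Measurable.ennreal_ofReal
    exact ((measurable_const.mul hf).mul (hGmeas.comp hw))
  have hsum : (∫⁻ x in T, g x) + (∫⁻ x in T, g x)
      = (∫⁻ x in T, ENNReal.ofReal (f x)) + (∫⁻ x in T, ENNReal.ofReal (f x)) := by
    nth_rewrite 2 [hkey]
    rw [← lintegral_add_left hImeas, ← lintegral_add_left (by fun_prop : Measurable fun x => ENNReal.ofReal (f x))]
    refine setLIntegral_congr_fun hT (fun x _ => ?_)
    simp only [hgdef]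
    rw [← ENNReal.ofReal_add, ← ENNReal.ofReal_add]
    · ring_nf
    · exact hf_nonneg x
    · exact hf_nonneg x
    · exact mul_nonneg (mul_nonneg (by norm_num) (hf_nonneg x)) (hG0 (w x))
    · have h1 : 0 ≤ 1 - G (w x) := by linarith [hG1 (w x)]
      exact mul_nonneg (mul_nonneg (by norm_num) (hf_nonneg x)) h1
  have h2 : 2 * (∫⁻ x in T, g x) = 2 * (∫⁻ x in T, ENNReal.ofReal (f x)) := by
    rw [two_mul, two_mul]; exact hsum
  have := (ENNReal.mul_right_inj (by norm_num) (by norm_num)).mp h2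
  exact this.symm
end

section
/- Let f be a centrally symmetric density on ℝ^d and Z have density 2 f(z) G(w(z)) with G a symmetric CDF and w odd. Then for any positive semidefinite symmetric d×d matrix B, the quadratic form Zᵀ B Z has the same distribution as Yᵀ B Y where Y has density f. -/
open MeasureTheory ProbabilityTheory Matrix
open scoped ENNReal

/-- quadratic forms have the same distribution under the symmetric
density f and under the perturbed density 2 f(z) G(w(z)). -/
theorem stmt_5 {d : ℕ}
    (f : (Fin d → ℝ) → ℝ) (hf : Measurable f) (hf_nonneg : ∀ y, 0 ≤ f y)
    (hf_int : ∫ y, f y = 1) (hfsym : ∀ y, f (-y) = f y)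
    (μ : Measure ℝ) [IsProbabilityMeasure μ]
    (G : ℝ → ℝ) (hG : ∀ x, G x = (μ (Set.Iic x)).toReal)
    (hGsym : ∀ x, G (-x) = 1 - G x)
    (w : (Fin d → ℝ) → ℝ) (hw : Measurable w) (hodd : ∀ y, w (-y) = -w y)
    (B : Matrix (Fin d) (Fin d) ℝ) (hBsym : B.IsSymm) (hBpsd : B.PosSemidef) :
    Measure.map (fun z => z ⬝ᵥ B.mulVec z)
        (volume.withDensity (fun y => ENNReal.ofReal (f y)))
      = Measure.map (fun z => z ⬝ᵥ B.mulVec z)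
        (volume.withDensity (fun z => ENNReal.ofReal (2 * f z * G (w z)))) := by
  -- basic facts about G
  have hG0 : ∀ x, 0 ≤ G x := fun x => by rw [hG]; exact ENNReal.toReal_nonneg
  have hG1 : ∀ x, G x ≤ 1 := by
    intro x
    rw [hG]
    have h := prob_le_one (μ := μ) (s := Set.Iic x)
    calc (μ (Set.Iic x)).toReal ≤ (1 : ℝ≥0∞).toReal :=
          ENNReal.toReal_mono ENNReal.one_ne_top h
      _ = 1 := by simp
  have hGmono : Monotone G := by
    intro x y hxy
    rw [hG, hG]
    exact ENNReal.toReal_mono (measure_ne_top μ _)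
      (measure_mono (Set.Iic_subset_Iic.2 hxy))
  have hGmeas : Measurable G := hGmono.measurable
  -- the quadratic form is measurable
  have hT : Measurable (fun z : Fin d → ℝ => z ⬝ᵥ B.mulVec z) := by
    simp only [dotProduct, Matrix.mulVec]
    exact Finset.measurable_sum _ fun i _ => (measurable_pi_apply i).mul
      (Finset.measurable_sum _ fun j _ => measurable_const.mul (measurable_pi_apply j))
  -- the perturbed density is measurable
  have hgmeas : Measurable fun z => ENNReal.ofReal (2 * f z * G (w z)) :=
    ((measurable_const.mul hf).mul (hGmeas.comp hw)).ennreal_ofReal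
  ext s hs
  rw [Measure.map_apply hT hs, Measure.map_apply hT hs,
    withDensity_apply _ (hT hs), withDensity_apply _ (hT hs)]
  set E := (fun z : Fin d → ℝ => z ⬝ᵥ B.mulVec z) ⁻¹' s with hE
  have hEm : MeasurableSet E := hT hs
  -- E is symmetric
  have hEneg : Neg.neg '' E = E := by
    ext z
    constructor
    · rintro ⟨y, hy, rfl⟩
      simpa [E, Set.mem_preimage, Matrix.mulVec_neg] using hy
    · intro hz
      exact ⟨-z, by simpa [E, Set.mem_preimage, Matrix.mulVec_neg] using hz, by simp⟩
  -- reflection invariance of the integral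
  have hneg : MeasurePreserving (Neg.neg : (Fin d → ℝ) → (Fin d → ℝ)) volume volume :=
    Measure.measurePreserving_neg _
  have hrefl : ∫⁻ z in E, ENNReal.ofReal (2 * f z * G (w z))
      = ∫⁻ z in E, ENNReal.ofReal (2 * f z * (1 - G (w z))) := by
    have := hneg.setLIntegral_comp_emb
      (MeasurableEquiv.neg (Fin d → ℝ)).measurableEmbedding
      (fun z => ENNReal.ofReal (2 * f z * G (w z))) E
    rw [hEneg] at this
    rw [← this]
    refine setLIntegral_congr_fun hEm (fun z _ => ?_)
    rw [hfsym, hodd, hGsym]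
  -- pointwise addition identity
  have hadd : ∀ z, ENNReal.ofReal (2 * f z * G (w z))
      + ENNReal.ofReal (2 * f z * (1 - G (w z)))
      = 2 * ENNReal.ofReal (f z) := by
    intro z
    have h2f : 0 ≤ 2 * f z := by linarith [hf_nonneg z]
    rw [← ENNReal.ofReal_add (mul_nonneg h2f (hG0 _))
      (mul_nonneg h2f (by linarith [hG1 (w z)]))]
    have : 2 * f z * G (w z) + 2 * f z * (1 - G (w z)) = 2 * f z := by ring
    rw [this, ENNReal.ofReal_mul (by norm_num)]
    norm_num
  -- conclude via cancellation
  have key : (2 : ℝ≥0∞) * ∫⁻ z in E, ENNReal.ofReal (2 * f z * G (w z))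
      = (2 : ℝ≥0∞) * ∫⁻ z in E, ENNReal.ofReal (f z) := by
    rw [two_mul]
    nth_rewrite 2 [hrefl]
    rw [← lintegral_add_left hgmeas, ← lintegral_const_mul 2 hf.ennreal_ofReal]
    exact lintegral_congr fun z => hadd z
  exact ((ENNReal.mul_right_inj two_ne_zero (by norm_num)).1 key).symm
end

section
/- If V ~ Gamma(ψ, λ) with ψ, λ > 0, then for any a, b ∈ ℝ, E[Φ(a√V + b)] = P(T ≤ a√(ψ/λ)), where Φ is the standard normal CDF and T = (U - b)/√(Vλ/ψ) with U ~ N(0,1) independent of V, i.e. T is a noncentral t variate with 2ψ degrees of freedom and noncentrality parameter -b. -/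
open MeasureTheory ProbabilityTheory

/-- The standard normal cumulative distribution function. -/
noncomputable def stdNormalCDF (x : ℝ) : ℝ := (gaussianReal 0 1 (Set.Iic x)).toReal

lemma monotone_stdNormalCDF : Monotone stdNormalCDF := fun x y hxy => by
  unfold stdNormalCDF
  exact ENNReal.toReal_mono (measure_ne_top _ _) (measure_mono (Set.Iic_subset_Iic.mpr hxy))

lemma measurable_stdNormalCDF : Measurable stdNormalCDF :=
  monotone_stdNormalCDF.measurable

lemma measurable_gauss_Iic : Measurable (fun x : ℝ => gaussianReal 0 1 (Set.Iic x)) :=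
  Monotone.measurable (fun x y hxy => measure_mono (Set.Iic_subset_Iic.mpr hxy))

/-- if V ~ Gamma(ψ, λ) then E[Φ(a√V + b)] = P(T ≤ a√(ψ/λ)),
where T = (U - b)/√(Vλ/ψ) with U ~ N(0,1) independent of V. -/
theorem stmt_6 {Ω : Type*} [MeasureSpace Ω] [IsProbabilityMeasure (ℙ : Measure Ω)]
    (ψ lam : ℝ) (hψ : 0 < ψ) (hlam : 0 < lam)
    (V U : Ω → ℝ) (hV : Measurable V) (hU : Measurable U)
    (hVlaw : Measure.map V ℙ = gammaMeasure ψ lam)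
    (hUlaw : Measure.map U ℙ = gaussianReal 0 1)
    (hindep : IndepFun U V ℙ)
    (a b : ℝ) :
    ∫ ω, stdNormalCDF (a * Real.sqrt (V ω) + b)
      = (ℙ {ω | (U ω - b) / Real.sqrt (V ω * lam / ψ) ≤ a * Real.sqrt (ψ / lam)}).toReal := by
  set ν : Measure ℝ := gaussianReal 0 1 with hν
  set μ : Measure ℝ := gammaMeasure ψ lam with hμ
  -- V > 0 a.s.
  have hnull : ℙ {ω | V ω ≤ 0} = 0 := by
    have : {ω | V ω ≤ 0} = V ⁻¹' Set.Iic 0 := rfl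
    rw [this, ← Measure.map_apply hV measurableSet_Iic, hVlaw]
    have h1 : gammaMeasure ψ lam (Set.Iic 0) = ∫⁻ x in Set.Iic 0, gammaPDF ψ lam x := by
      rw [gammaMeasure, withDensity_apply _ measurableSet_Iic]
    have h2 : (Set.Iic (0:ℝ)) =ᵐ[volume] (Set.Iio (0:ℝ)) := by
      rw [Filter.eventuallyEq_set]
      filter_upwards [compl_mem_ae_iff.mpr (measure_singleton (0:ℝ))] with x hx
      simp only [Set.mem_compl_iff, Set.mem_singleton_iff] at hx
      simp only [Set.mem_Iic, Set.mem_Iio]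
      exact ⟨fun h => lt_of_le_of_ne h hx, le_of_lt⟩
    rw [h1, setLIntegral_congr h2]
    exact ProbabilityTheory.lintegral_gammaPDF_of_nonpos le_rfl
  -- joint law
  have hjoint : Measure.map (fun ω => (U ω, V ω)) ℙ = ν.prod μ := by
    rw [← hUlaw, ← hVlaw]
    exact (ProbabilityTheory.indepFun_iff_map_prod_eq_prod_map_map hU.aemeasurable
      hV.aemeasurable).mp hindep
  -- the product set
  set s : Set (ℝ × ℝ) := {p : ℝ × ℝ | p.1 ≤ a * Real.sqrt p.2 + b} with hs
  have hsmeas : MeasurableSet s := by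
    apply measurableSet_le measurable_fst
    exact ((measurable_snd.sqrt).const_mul a).add_const b
  -- RHS = ℙ of the "core" event
  have hRHS : ℙ {ω | (U ω - b) / Real.sqrt (V ω * lam / ψ) ≤ a * Real.sqrt (ψ / lam)}
      = ℙ {ω | U ω ≤ a * Real.sqrt (V ω) + b} := by
    have key : ∀ ω, 0 < V ω →
        ((U ω - b) / Real.sqrt (V ω * lam / ψ) ≤ a * Real.sqrt (ψ / lam)
          ↔ U ω ≤ a * Real.sqrt (V ω) + b) := by
      intro ω hv
      have hpos : 0 < Real.sqrt (V ω * lam / ψ) :=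
        Real.sqrt_pos.mpr (by positivity)
      rw [div_le_iff₀ hpos]
      have hprod : Real.sqrt (ψ / lam) * Real.sqrt (V ω * lam / ψ) = Real.sqrt (V ω) := by
        rw [← Real.sqrt_mul (by positivity)]
        congr 1
        field_simp
      constructor
      · intro h
        have := h.trans_eq (by rw [mul_assoc, hprod])
        linarith
      · intro h
        rw [mul_assoc, hprod]
        linarith
    have e1 : {ω | (U ω - b) / Real.sqrt (V ω * lam / ψ) ≤ a * Real.sqrt (ψ / lam)}
        =ᵐ[ℙ] {ω | U ω ≤ a * Real.sqrt (V ω) + b} := by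
      rw [Filter.eventuallyEq_set]
      filter_upwards [measure_eq_zero_iff_ae_notMem.mp hnull] with ω hω
      have hv : 0 < V ω := lt_of_not_ge hω
      exact key ω hv
    exact measure_congr e1
  rw [hRHS]
  -- rewrite RHS probability via joint law
  have hpre : {ω | U ω ≤ a * Real.sqrt (V ω) + b} = (fun ω => (U ω, V ω)) ⁻¹' s := rfl
  have hRHS2 : ℙ {ω | U ω ≤ a * Real.sqrt (V ω) + b} = (ν.prod μ) s := by
    rw [hpre, ← Measure.map_apply (hU.prodMk hV) hsmeas, hjoint]
  haveI : IsProbabilityMeasure μ := ProbabilityTheory.isProbabilityMeasure_gammaMeasure hψ hlam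
  rw [hRHS2, Measure.prod_apply_symm hsmeas]
  have hsect : ∀ v : ℝ, ν ((fun u => (u, v)) ⁻¹' s) = ν (Set.Iic (a * Real.sqrt v + b)) := by
    intro v; rfl
  simp_rw [hsect]
  -- LHS: change of variables
  have hcomp : Measurable (fun v : ℝ => stdNormalCDF (a * Real.sqrt v + b)) :=
    measurable_stdNormalCDF.comp ((measurable_id.sqrt.const_mul a).add_const b)
  have hLHS : ∫ ω, stdNormalCDF (a * Real.sqrt (V ω) + b)
      = ∫ v, stdNormalCDF (a * Real.sqrt v + b) ∂μ := by
    rw [← hVlaw, integral_map hV.aemeasurable hcomp.aestronglyMeasurable]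
  rw [hLHS]
  -- finish with integral_toReal
  have hmb : Measurable (fun v : ℝ => ν (Set.Iic (a * Real.sqrt v + b))) :=
    measurable_gauss_Iic.comp ((measurable_id.sqrt.const_mul a).add_const b)
  rw [← integral_toReal hmb.aemeasurable (Filter.Eventually.of_forall fun v =>
    measure_lt_top _ _)]
  rfl
end

section
/- If V ~ Gamma(ν/2, ν/2) for ν > 0, then for any a ∈ ℝ, E[Φ(a√V)] = T₁(a; ν), where T₁(·; ν) is the CDF of the Student t distribution with ν degrees of freedom. -/
open MeasureTheory ProbabilityTheory

lemma gammaMeasure_Iic_zero {a r : ℝ} : gammaMeasure a r (Set.Iic 0) = 0 := by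
  rw [gammaMeasure, withDensity_apply _ measurableSet_Iic]
  have : Set.Iic (0:ℝ) = Set.Iio 0 ∪ {0} := by
    ext x; simp [le_iff_lt_or_eq]
  rw [this, lintegral_union (measurableSet_singleton 0) (by rw [Set.disjoint_left]; rintro x (hx : x < 0) rfl; exact lt_irrefl _ hx)]
  rw [lintegral_gammaPDF_of_nonpos le_rfl]
  simp [Measure.restrict_singleton]

lemma gammaMeasure_ae_pos {a r : ℝ} : ∀ᵐ x ∂(gammaMeasure a r), 0 < x := by
  rw [ae_iff]
  have : {x : ℝ | ¬ 0 < x} = Set.Iic 0 := by ext x; simp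
  rw [this]; exact gammaMeasure_Iic_zero

/-- if V ~ Gamma(ν/2, ν/2) then E[Φ(a√V)] = T₁(a; ν), the CDF of the
Student t distribution with ν degrees of freedom, realised as the law of U/√V
with U ~ N(0,1) independent of V. -/
theorem stmt_7 {Ω : Type*} [MeasureSpace Ω] [IsProbabilityMeasure (ℙ : Measure Ω)]
    (ν : ℝ) (hν : 0 < ν)
    (V U : Ω → ℝ) (hV : Measurable V) (hU : Measurable U)
    (hVlaw : Measure.map V ℙ = gammaMeasure (ν / 2) (ν / 2))
    (hUlaw : Measure.map U ℙ = gaussianReal 0 1)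
    (hindep : IndepFun U V ℙ)
    (a : ℝ) :
    ∫ ω, stdNormalCDF (a * Real.sqrt (V ω))
      = (ℙ {ω | U ω / Real.sqrt (V ω) ≤ a}).toReal := by
  set γ := gammaMeasure (ν / 2) (ν / 2) with hγ
  have hγprob : IsProbabilityMeasure γ :=
    isProbabilityMeasure_gammaMeasure (by linarith) (by linarith)
  -- joint law
  have hjoint : Measure.map (fun ω => (U ω, V ω)) ℙ = (gaussianReal 0 1).prod γ := by
    rw [← hUlaw, ← hVlaw]
    exact (indepFun_iff_map_prod_eq_prod_map_map hU.aemeasurable hV.aemeasurable).mp hindep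
  have hsmeas : MeasurableSet {p : ℝ × ℝ | p.1 / Real.sqrt p.2 ≤ a} :=
    measurableSet_le (measurable_fst.div (measurable_snd.sqrt)) measurable_const
  -- RHS
  have hRHS : ℙ {ω | U ω / Real.sqrt (V ω) ≤ a}
      = ∫⁻ v, gaussianReal 0 1 (Set.Iic (a * Real.sqrt v)) ∂γ := by
    have h1 : {ω | U ω / Real.sqrt (V ω) ≤ a}
        = (fun ω => (U ω, V ω)) ⁻¹' {p : ℝ × ℝ | p.1 / Real.sqrt p.2 ≤ a} := rfl
    rw [h1, ← Measure.map_apply (hU.prodMk hV) hsmeas, hjoint,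
      Measure.prod_apply_symm hsmeas]
    refine lintegral_congr_ae ?_
    filter_upwards [gammaMeasure_ae_pos (a := ν/2) (r := ν/2)] with v hv
    congr 1
    ext u
    have hsv : 0 < Real.sqrt v := Real.sqrt_pos.mpr hv
    simp only [Set.mem_preimage, Set.mem_setOf_eq, Set.mem_Iic]
    rw [div_le_iff₀ hsv]
  -- LHS
  rw [show (∫ ω, stdNormalCDF (a * Real.sqrt (V ω)))
      = ∫ v, stdNormalCDF (a * Real.sqrt v) ∂γ by
    rw [← hVlaw]
    exact (integral_map hV.aemeasurable
      ((measurable_stdNormalCDF.comp ((measurable_const.mul Real.continuous_sqrt.measurable))).aestronglyMeasurable)).symm]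
  rw [hRHS]
  have hm : Measurable fun v : ℝ => gaussianReal 0 1 (Set.Iic (a * Real.sqrt v)) := by
    have hmono : Monotone fun x : ℝ => gaussianReal 0 1 (Set.Iic x) :=
      fun x y hxy => measure_mono (Set.Iic_subset_Iic.mpr hxy)
    exact hmono.measurable.comp (measurable_const.mul Real.continuous_sqrt.measurable)
  rw [← integral_toReal hm.aemeasurable
    (Filter.Eventually.of_forall fun v => measure_lt_top _ _)]
  rfl
end

section
/- Let Z have the standard d-dimensional skew normal density 2 φ_d(z; Ω̄) Φ(αᵀ z), where Ω̄ is a positive definite correlation matrix, and let V ~ χ²_ν/ν independent of Z. Then Y = V^{-1/2} Z has density f_Y(y) = 2 t_d(y; ν) T₁( αᵀ y √((ν+d)/(Q_y+ν)); ν+d ), where Q_y = yᵀ Ω̄^{-1} y, t_d is the d-dimensional Student t density with ν degrees of freedom and dispersion matrix Ω̄, and T₁(·; ν+d) is the scalar Student t CDF with ν+d degrees of freedom. -/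
open MeasureTheory ProbabilityTheory Matrix Real

open Set
open scoped ENNReal

lemma eq_of_log_eq {x y : ℝ} (hx : 0 < x) (hy : 0 < y) (h : Real.log x = Real.log y) : x = y := by
  rw [← Real.exp_log hx, ← Real.exp_log hy, h]

lemma my_integral_comp_mul_left_Iic (g : ℝ → ℝ) (a : ℝ) {b : ℝ} (hb : 0 < b) :
    (∫ x in Iic a, g (b * x)) = b⁻¹ • ∫ x in Iic (b * a), g x := by
  have h1 : MeasurableSet (Iic a) := measurableSet_Iic
  have h2 : MeasurableSet (Iic (b*a)) := measurableSet_Iic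
  rw [← integral_indicator h1, ← integral_indicator h2,
    ← abs_of_pos (inv_pos.mpr hb), ← Measure.integral_comp_mul_left]
  congr 1
  ext1 x
  rw [← Set.indicator_comp_right, preimage_const_mul_Iic₀ _ hb, mul_comm b a,
    mul_div_cancel_right₀ _ hb.ne']
  rfl

lemma integrable_one_add_sq_div {k m : ℝ} (hk : 0 < k) (hm : 1 < 2*m) :
    Integrable fun s : ℝ => (1 + s^2/k) ^ (-m) := by
  have h0 : Integrable fun x : ℝ => ((1:ℝ) + ‖x‖^2) ^ (-(2*m)/2) :=
    integrable_rpow_neg_one_add_norm_sq (by simpa using hm)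
  have h0' : Integrable fun x : ℝ => ((1:ℝ) + x^2) ^ (-m) := by
    simpa [Real.norm_eq_abs, sq_abs, neg_div, mul_div_assoc, mul_div_cancel_left₀] using h0
  have := h0'.comp_mul_left' (R := (Real.sqrt k)⁻¹)
    (inv_ne_zero (Real.sqrt_ne_zero'.2 hk))
  refine this.congr (Filter.Eventually.of_forall fun s => ?_)
  simp only
  congr 2
  rw [mul_pow, inv_pow, sq_sqrt hk.le]
  ring

lemma integrableOn_rpow_mul_exp_neg_mul {m r : ℝ} (hm : 0 < m) (hr : 0 < r) :
    IntegrableOn (fun v : ℝ => v ^ (m-1) * Real.exp (-(r*v))) (Ioi 0) := by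
  have h1 : IntegrableOn (fun v : ℝ => Real.exp (-(r*v)) * (r*v) ^ (m-1)) (Ioi 0) :=
    (integrableOn_Ioi_comp_mul_left_iff
      (fun x : ℝ => Real.exp (-x) * x ^ (m-1)) 0 hr).2
      (by rw [mul_zero]; exact Real.GammaIntegral_convergent hm)
  refine IntegrableOn.congr_fun (h1.const_mul (r ^ (1-m))) (fun v hv => ?_) measurableSet_Ioi
  have hv' : (0:ℝ) < v := hv
  rw [Real.mul_rpow hr.le hv'.le,
    show r ^ (1-m) * (Real.exp (-(r*v)) * (r ^ (m-1) * v ^ (m-1)))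
    = (r ^ (1-m) * r ^ (m-1)) * (v ^ (m-1) * Real.exp (-(r*v))) by ring,
    ← Real.rpow_add hr]
  norm_num

lemma coeff_id (d : ℕ) {n q kk mm D G1 G2 G3 : ℝ} (hn : 0 < n) (hq : 0 < q) (hk : 0 < kk)
    (hD : 0 < D) (hG1 : 0 < G1) (hG2 : 0 < G2) (hG3 : 0 < G3)
    (hkk : kk = n + (d:ℝ)) (hmm : mm = (kk+1)/2) :
    ((n/2) ^ (n/2) / G1 * 2 * ((2*π) ^ (-(d:ℝ)/2) * D ^ (-(1:ℝ)/2)) * (Real.sqrt (2*π))⁻¹)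
      * G3 * (q/2) ^ (-mm) * Real.sqrt (q/kk)
    = 2 * (G2 / (Real.sqrt D * (π*n) ^ ((d:ℝ)/2) * G1) * ((q/n) ^ (-kk / 2)))
        * (G3 / (Real.sqrt (π*kk) * G2)) := by
  have hpi := Real.pi_pos
  subst hmm hkk
  apply eq_of_log_eq (by positivity) (by positivity)
  simp (disch := positivity) only [Real.log_mul, Real.log_div, Real.log_inv,
    Real.log_rpow, Real.log_sqrt]
  ring

lemma lintegral_preimage_smul {d : ℕ} (g : (Fin d → ℝ) → ℝ≥0∞) (hg : Measurable g)
    {c : ℝ} (hc : 0 < c) {s : Set (Fin d → ℝ)} (hs : MeasurableSet s) :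
    ∫⁻ z in (fun z : Fin d → ℝ => c⁻¹ • z) ⁻¹' s, g z
      = ENNReal.ofReal (c ^ d) * ∫⁻ y in s, g (c • y) := by
  have hA : MeasurableSet ((fun z : Fin d → ℝ => c⁻¹ • z) ⁻¹' s) :=
    (measurable_const_smul c⁻¹) hs
  have hfin : Module.finrank ℝ (Fin d → ℝ) = d := Module.finrank_fin_fun ℝ
  have hmap := Measure.map_addHaar_smul (volume : Measure (Fin d → ℝ)) hc.ne'
  have h1 : ∫⁻ z, ((fun z : Fin d → ℝ => c⁻¹ • z) ⁻¹' s).indicator g z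
        ∂(Measure.map (c • ·) volume)
      = ∫⁻ x, ((fun z : Fin d → ℝ => c⁻¹ • z) ⁻¹' s).indicator g (c • x) ∂volume :=
    lintegral_map (hg.indicator hA) (measurable_const_smul c)
  rw [hmap, lintegral_smul_measure] at h1
  have h2 : ∀ x, ((fun z : Fin d → ℝ => c⁻¹ • z) ⁻¹' s).indicator g (c • x)
      = s.indicator (fun y => g (c • y)) x := by
    intro x
    by_cases hx : x ∈ s
    · rw [Set.indicator_of_mem hx, Set.indicator_of_mem]
      show c⁻¹ • (c • x) ∈ s
      rwa [inv_smul_smul₀ hc.ne']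
    · rw [Set.indicator_of_notMem, Set.indicator_of_notMem hx]
      show ¬ c⁻¹ • (c • x) ∈ s
      rwa [inv_smul_smul₀ hc.ne']
  simp_rw [h2] at h1
  rw [lintegral_indicator hA, lintegral_indicator hs] at h1
  rw [← h1, hfin, smul_eq_mul, ← mul_assoc, ← ENNReal.ofReal_mul (by positivity), abs_of_pos (by positivity),
    mul_inv_cancel₀ (by positivity), ENNReal.ofReal_one, one_mul]


/-- The centered d-dimensional normal density with covariance matrix `S`. -/
noncomputable def mvNormalPDF {d : ℕ} (S : Matrix (Fin d) (Fin d) ℝ) (z : Fin d → ℝ) : ℝ :=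
  (2 * π) ^ (-(d : ℝ) / 2) * S.det ^ (-(1 : ℝ) / 2) *
    Real.exp (-(z ⬝ᵥ S⁻¹.mulVec z) / 2)

/-- The density of the scalar Student t distribution with ν degrees of freedom. -/
noncomputable def studentPDF (ν u : ℝ) : ℝ :=
  Real.Gamma ((ν + 1) / 2) / (Real.sqrt (π * ν) * Real.Gamma (ν / 2)) *
    (1 + u ^ 2 / ν) ^ (-(ν + 1) / 2)

/-- The CDF of the scalar Student t distribution with ν degrees of freedom. -/
noncomputable def studentCDF (ν x : ℝ) : ℝ := ∫ u in Set.Iic x, studentPDF ν u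

/-- The centered d-dimensional Student t density with ν degrees of freedom and
dispersion matrix `S`. -/
noncomputable def mvStudentPDF {d : ℕ} (S : Matrix (Fin d) (Fin d) ℝ) (ν : ℝ)
    (y : Fin d → ℝ) : ℝ :=
  Real.Gamma ((ν + d) / 2) /
      (Real.sqrt S.det * (π * ν) ^ ((d : ℝ) / 2) * Real.Gamma (ν / 2)) *
    (1 + (y ⬝ᵥ S⁻¹.mulVec y) / ν) ^ (-(ν + d) / 2)

lemma stdNormalCDF_eq_integral (x : ℝ) :
    stdNormalCDF x = ∫ t in Iic x, gaussianPDFReal 0 1 t := by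
  rw [stdNormalCDF, gaussianReal_apply_eq_integral 0 one_ne_zero, ENNReal.toReal_ofReal]
  exact setIntegral_nonneg measurableSet_Iic fun t _ => gaussianPDFReal_nonneg _ _ _

lemma stdNormalCDF_sqrt_mul {v : ℝ} (hv : 0 < v) (a : ℝ) :
    stdNormalCDF (Real.sqrt v * a)
      = ∫ t in Iic a, Real.sqrt v * ((Real.sqrt (2*π))⁻¹ * Real.exp (-(v * t^2)/2)) := by
  rw [stdNormalCDF_eq_integral]
  have hb : 0 < Real.sqrt v := Real.sqrt_pos.2 hv
  have h := my_integral_comp_mul_left_Iic (gaussianPDFReal 0 1) a hb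
  rw [smul_eq_mul] at h
  have h2 : (∫ t in Iic (Real.sqrt v * a), gaussianPDFReal 0 1 t)
      = Real.sqrt v * ∫ x in Iic a, gaussianPDFReal 0 1 (Real.sqrt v * x) := by
    rw [h, ← mul_assoc, mul_inv_cancel₀ hb.ne', one_mul]
  rw [h2, ← integral_const_mul]
  refine setIntegral_congr_fun measurableSet_Iic fun t _ => ?_
  simp only [gaussianPDFReal, NNReal.coe_one, mul_one, sub_zero]
  rw [mul_pow, sq_sqrt hv.le]

lemma key_lemma (d : ℕ) {ν Q a D : ℝ} (hν : 0 < ν) (hQ : 0 ≤ Q) (hD : 0 < D) :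
    ∫⁻ v in Ioi (0:ℝ), ENNReal.ofReal (gammaPDFReal (ν/2) (ν/2) v *
        (Real.sqrt v ^ d * (2 * ((2*π) ^ (-(d:ℝ)/2) * D ^ (-(1:ℝ)/2) *
          Real.exp (-(v * Q)/2)) * stdNormalCDF (Real.sqrt v * a))))
      = ENNReal.ofReal (2 * (Real.Gamma ((ν + (d:ℝ))/2) /
            (Real.sqrt D * (π*ν) ^ ((d:ℝ)/2) * Real.Gamma (ν/2)) *
          (1 + Q/ν) ^ (-(ν + (d:ℝ)) / 2)) *
          studentCDF (ν + (d:ℝ)) (a * Real.sqrt ((ν + (d:ℝ))/(Q + ν)))) := by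
  have hπ := Real.pi_pos
  set m : ℝ := (ν + (d:ℝ) + 1)/2 with hm_def
  set k : ℝ := ν + (d:ℝ) with hk_def
  have hk : 0 < k := by positivity
  have hm : 0 < m := by rw [hm_def]; positivity
  have h2m : 1 < 2*m := by rw [hm_def]; have : (0:ℝ) ≤ (d:ℝ) := Nat.cast_nonneg d; linarith
  have hνQ : 0 < ν + Q := by linarith
  have hΓν : 0 < Real.Gamma (ν/2) := Real.Gamma_pos_of_pos (by positivity)
  have hΓk : 0 < Real.Gamma (k/2) := Real.Gamma_pos_of_pos (by positivity)
  have hΓm : 0 < Real.Gamma m := Real.Gamma_pos_of_pos hm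
  set C : ℝ := (ν/2) ^ (ν/2) / Real.Gamma (ν/2) * 2 *
      ((2*π) ^ (-(d:ℝ)/2) * D ^ (-(1:ℝ)/2)) * (Real.sqrt (2*π))⁻¹ with hC_def
  have hC : 0 < C := by
    rw [hC_def]
    have h1 : (0:ℝ) < (ν/2) ^ (ν/2) := Real.rpow_pos_of_pos (by positivity) _
    positivity
  -- Step AB : pointwise rewrite of the integrand for v > 0
  have stepA : ∀ v : ℝ, 0 < v → (gammaPDFReal (ν/2) (ν/2) v *
        (Real.sqrt v ^ d * (2 * ((2*π) ^ (-(d:ℝ)/2) * D ^ (-(1:ℝ)/2) *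
          Real.exp (-(v * Q)/2)) * stdNormalCDF (Real.sqrt v * a))))
      = ∫ t in Iic a, C * (v ^ (m-1) * Real.exp (-((ν+Q+t^2)/2 * v))) := by
    intro v hv
    rw [stdNormalCDF_sqrt_mul hv a]
    rw [show (gammaPDFReal (ν/2) (ν/2) v *
        (Real.sqrt v ^ d * (2 * ((2*π) ^ (-(d:ℝ)/2) * D ^ (-(1:ℝ)/2) *
          Real.exp (-(v * Q)/2)) * (∫ t in Iic a, Real.sqrt v * ((Real.sqrt (2*π))⁻¹ *
            Real.exp (-(v * t^2)/2))))))
        = (gammaPDFReal (ν/2) (ν/2) v * (Real.sqrt v ^ d * (2 * ((2*π) ^ (-(d:ℝ)/2) *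
            D ^ (-(1:ℝ)/2) * Real.exp (-(v * Q)/2)))))
          • ∫ t in Iic a, Real.sqrt v * ((Real.sqrt (2*π))⁻¹ * Real.exp (-(v * t^2)/2))
        from by rw [smul_eq_mul]; ring, ← integral_smul]
    refine setIntegral_congr_fun measurableSet_Iic fun t _ => ?_
    rw [smul_eq_mul]
    have hg : gammaPDFReal (ν/2) (ν/2) v
        = (ν/2)^(ν/2)/Real.Gamma (ν/2) * v^(ν/2-1) * Real.exp (-(ν/2*v)) := by
      rw [gammaPDFReal, if_pos hv.le]
    have h1 : Real.sqrt v ^ d = v ^ ((d:ℝ)/2) := by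
      rw [Real.sqrt_eq_rpow, ← Real.rpow_natCast (v ^ ((1:ℝ)/2)) d, ← Real.rpow_mul hv.le]
      congr 1; ring
    have h2 : Real.sqrt v = v ^ ((1:ℝ)/2) := Real.sqrt_eq_rpow v
    have hpow : v^(ν/2-1) * v^((d:ℝ)/2) * v^((1:ℝ)/2) = v ^ (m-1) := by
      rw [← Real.rpow_add hv, ← Real.rpow_add hv, hm_def]; congr 1; ring
    have hexp : Real.exp (-(ν/2*v)) * Real.exp (-(v*Q)/2) * Real.exp (-(v*t^2)/2)
        = Real.exp (-((ν+Q+t^2)/2*v)) := by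
      rw [← Real.exp_add, ← Real.exp_add]; congr 1; ring
    rw [hg, h1, h2, ← hpow, ← hexp, hC_def]
    ring
  have stepAB : ∀ v ∈ Ioi (0:ℝ), ENNReal.ofReal (gammaPDFReal (ν/2) (ν/2) v *
        (Real.sqrt v ^ d * (2 * ((2*π) ^ (-(d:ℝ)/2) * D ^ (-(1:ℝ)/2) *
          Real.exp (-(v * Q)/2)) * stdNormalCDF (Real.sqrt v * a))))
      = ∫⁻ t in Iic a, ENNReal.ofReal (C * (v ^ (m-1) * Real.exp (-((ν+Q+t^2)/2 * v)))) := by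
    intro v hv
    have hv : (0:ℝ) < v := hv
    have hexp2 : ∀ t : ℝ, Real.exp (-((ν+Q)/2*v)) * Real.exp (-(v/2) * t^2)
        = Real.exp (-((ν+Q+t^2)/2 * v)) := fun t => by rw [← Real.exp_add]; congr 1; ring
    have hint : Integrable (fun t : ℝ => C * (v ^ (m-1) * Real.exp (-((ν+Q+t^2)/2 * v))))
        (volume.restrict (Iic a)) := by
      have h0 : Integrable (fun t : ℝ => (C * v^(m-1) * Real.exp (-((ν+Q)/2*v)))
          * Real.exp (-(v/2) * t^2)) volume :=
        (integrable_exp_neg_mul_sq (half_pos hv)).const_mul _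
      exact (h0.congr (Filter.Eventually.of_forall fun t => by
        simp only; linear_combination (C * v ^ (m-1)) * hexp2 t)).restrict
    rw [stepA v hv, ofReal_integral_eq_lintegral_ofReal hint ?_]
    refine (ae_restrict_iff' measurableSet_Iic).2 (Filter.Eventually.of_forall fun t _ => ?_)
    have h1 : (0:ℝ) ≤ v ^ (m-1) := Real.rpow_nonneg hv.le _
    positivity
  -- splitting lemma for the power
  have hsplit : ∀ t : ℝ, (1/((ν+Q+t^2)/2)) ^ m = ((ν+Q)/2) ^ (-m) * (1+t^2/(ν+Q)) ^ (-m) := by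
    intro t
    have ht2 := sq_nonneg t
    have hlam : 0 < (ν+Q+t^2)/2 := by positivity
    have h1t : 0 < 1 + t^2/(ν+Q) := by positivity
    rw [one_div, Real.inv_rpow hlam.le, Real.rpow_neg (by positivity : (0:ℝ) ≤ (ν+Q)/2),
      Real.rpow_neg h1t.le, ← mul_inv, ← Real.mul_rpow (by positivity : (0:ℝ) ≤ (ν+Q)/2) h1t.le]
    congr 2
    field_simp
  -- Step D : gamma integral in v
  have stepD : ∀ t ∈ Iic a, (∫⁻ v in Ioi (0:ℝ),
        ENNReal.ofReal (C * (v ^ (m-1) * Real.exp (-((ν+Q+t^2)/2 * v)))))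
      = ENNReal.ofReal (C * ((1/((ν+Q+t^2)/2)) ^ m * Real.Gamma m)) := by
    intro t _
    have ht2 := sq_nonneg t
    have hlam : 0 < (ν+Q+t^2)/2 := by positivity
    rw [← ofReal_integral_eq_lintegral_ofReal
      ((integrableOn_rpow_mul_exp_neg_mul hm hlam).const_mul C)
      ((ae_restrict_iff' measurableSet_Ioi).2 (Filter.Eventually.of_forall fun v hv => by
        have hv' : (0:ℝ) < v := hv
        have h1 : (0:ℝ) ≤ v ^ (m-1) := Real.rpow_nonneg hv'.le _
        positivity))]
    congr 1
    rw [integral_const_mul, integral_rpow_mul_exp_neg_mul_Ioi hm hlam]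
  -- integrability of the t-integrand
  have hintD : Integrable (fun t : ℝ => C * ((1/((ν+Q+t^2)/2)) ^ m * Real.Gamma m))
      (volume.restrict (Iic a)) := by
    refine (((integrable_one_add_sq_div hνQ h2m).const_mul
      (C * Real.Gamma m * ((ν+Q)/2) ^ (-m))).congr
      (Filter.Eventually.of_forall fun t => ?_)).restrict
    simp only
    rw [hsplit t]; ring
  have hnnD : 0 ≤ᵐ[volume.restrict (Iic a)]
      fun t : ℝ => C * ((1/((ν+Q+t^2)/2)) ^ m * Real.Gamma m) := by
    refine Filter.Eventually.of_forall fun t => ?_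
    have ht2 := sq_nonneg t
    have h1 : (0:ℝ) ≤ (1/((ν+Q+t^2)/2)) ^ m := Real.rpow_nonneg (by positivity) _
    positivity
  -- measurability for Tonelli
  have hmeas : AEMeasurable (Function.uncurry fun (v t : ℝ) =>
      ENNReal.ofReal (C * (v ^ (m-1) * Real.exp (-((ν+Q+t^2)/2 * v)))))
      ((volume.restrict (Ioi (0:ℝ))).prod (volume.restrict (Iic a))) := by
    apply Measurable.aemeasurable
    fun_prop
  -- the substitution in the t-integral
  have hbpos : 0 < (ν + (d:ℝ))/(Q+ν) := div_pos hk (by linarith)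
  have hb : 0 < Real.sqrt ((ν + (d:ℝ))/(Q+ν)) := Real.sqrt_pos.2 hbpos
  have hbx : ∀ x : ℝ, (1+(Real.sqrt ((ν + (d:ℝ))/(Q+ν))*x)^2/k) ^ (-m)
      = (1+x^2/(ν+Q)) ^ (-m) := by
    intro x
    congr 2
    rw [mul_pow, sq_sqrt hbpos.le, hk_def]
    field_simp
    ring
  have hsub := my_integral_comp_mul_left_Iic (fun s => (1+s^2/k) ^ (-m)) a hb
  have hstudent : studentCDF k (a * Real.sqrt (k/(Q+ν)))
      = (Real.Gamma ((k+1)/2) / (Real.sqrt (π*k) * Real.Gamma (k/2))) *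
        ∫ u in Iic (a * Real.sqrt (k/(Q+ν))), (1+u^2/k) ^ (-m) := by
    rw [studentCDF]
    simp only [studentPDF, show (-(k+1))/2 = -m by rw [hm_def]; ring]
    rw [integral_const_mul]
  calc
    ∫⁻ v in Ioi (0:ℝ), ENNReal.ofReal (gammaPDFReal (ν/2) (ν/2) v *
        (Real.sqrt v ^ d * (2 * ((2*π) ^ (-(d:ℝ)/2) * D ^ (-(1:ℝ)/2) *
          Real.exp (-(v * Q)/2)) * stdNormalCDF (Real.sqrt v * a))))
      = ∫⁻ v in Ioi (0:ℝ), ∫⁻ t in Iic a,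
          ENNReal.ofReal (C * (v ^ (m-1) * Real.exp (-((ν+Q+t^2)/2 * v)))) :=
        setLIntegral_congr_fun_ae measurableSet_Ioi (Filter.Eventually.of_forall stepAB)
    _ = ∫⁻ t in Iic a, ∫⁻ v in Ioi (0:ℝ),
          ENNReal.ofReal (C * (v ^ (m-1) * Real.exp (-((ν+Q+t^2)/2 * v)))) :=
        lintegral_lintegral_swap hmeas
    _ = ∫⁻ t in Iic a, ENNReal.ofReal (C * ((1/((ν+Q+t^2)/2)) ^ m * Real.Gamma m)) :=
        setLIntegral_congr_fun_ae measurableSet_Iic (Filter.Eventually.of_forall stepD)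
    _ = ENNReal.ofReal (∫ t in Iic a, C * ((1/((ν+Q+t^2)/2)) ^ m * Real.Gamma m)) :=
        (ofReal_integral_eq_lintegral_ofReal hintD hnnD).symm
    _ = ENNReal.ofReal (2 * (Real.Gamma ((ν + (d:ℝ))/2) /
            (Real.sqrt D * (π*ν) ^ ((d:ℝ)/2) * Real.Gamma (ν/2)) *
          (1 + Q/ν) ^ (-(ν + (d:ℝ)) / 2)) *
          studentCDF (ν + (d:ℝ)) (a * Real.sqrt ((ν + (d:ℝ))/(Q + ν)))) := by
        congr 1
        calc
          ∫ t in Iic a, C * ((1/((ν+Q+t^2)/2)) ^ m * Real.Gamma m)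
            = ∫ t in Iic a, (C * Real.Gamma m * ((ν+Q)/2) ^ (-m)) * (1+t^2/(ν+Q)) ^ (-m) :=
              setIntegral_congr_fun measurableSet_Iic fun t _ => by rw [hsplit t]; ring
          _ = (C * Real.Gamma m * ((ν+Q)/2) ^ (-m)) * ∫ t in Iic a, (1+t^2/(ν+Q)) ^ (-m) :=
              integral_const_mul _ _
          _ = (C * Real.Gamma m * ((ν+Q)/2) ^ (-m)) * ((Real.sqrt ((ν + (d:ℝ))/(Q+ν)))⁻¹ *
              ∫ x in Iic (Real.sqrt ((ν + (d:ℝ))/(Q+ν)) * a), (1+x^2/k) ^ (-m)) := by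
              rw [show (∫ t in Iic a, (1+t^2/(ν+Q)) ^ (-m))
                  = ∫ x in Iic a, (fun s => (1+s^2/k) ^ (-m)) (Real.sqrt ((ν + (d:ℝ))/(Q+ν)) * x)
                from setIntegral_congr_fun measurableSet_Iic fun x _ => by
                  simp only; rw [← hk_def] at hbx ⊢; exact (hbx x).symm]
              rw [hsub, smul_eq_mul, hk_def]
          _ = 2 * (Real.Gamma ((ν + (d:ℝ))/2) /
                (Real.sqrt D * (π*ν) ^ ((d:ℝ)/2) * Real.Gamma (ν/2)) *
              (1 + Q/ν) ^ (-(ν + (d:ℝ)) / 2)) *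
              studentCDF (ν + (d:ℝ)) (a * Real.sqrt ((ν + (d:ℝ))/(Q + ν))) := by
              have hbinv : (Real.sqrt (k/(Q+ν)))⁻¹ = Real.sqrt ((ν+Q)/k) := by
                rw [← Real.sqrt_inv, inv_div, add_comm Q ν]
              have h1Q : (1:ℝ) + Q/ν = (ν+Q)/ν := by field_simp
              have hco := coeff_id d (n := ν) (q := ν+Q) (kk := k) (mm := m) (D := D)
                (G1 := Real.Gamma (ν/2)) (G2 := Real.Gamma (k/2)) (G3 := Real.Gamma m)
                hν hνQ hk hD hΓν hΓk hΓm hk_def hm_def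
              simp only [← hk_def]
              rw [hstudent, mul_comm (Real.sqrt (k/(Q+ν))) a, ← hm_def, hbinv, h1Q, hC_def]
              linear_combination (∫ u in Iic (a * Real.sqrt (k/(Q+ν))), (1+u^2/k) ^ (-m)) * hco

/-- if Z has the standard skew normal density 2 φ_d(z; Ω̄) Φ(αᵀz) and
V ~ χ²_ν/ν independent of Z, then Y = V^{-1/2} Z has the skew t density
2 t_d(y;ν) T₁(αᵀy √((ν+d)/(Q_y+ν)); ν+d). -/
theorem stmt_8 {Ω : Type*} [MeasureSpace Ω] [IsProbabilityMeasure (ℙ : Measure Ω)]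
    {d : ℕ} (Ωb : Matrix (Fin d) (Fin d) ℝ) (hΩ : Ωb.PosDef) (hcorr : ∀ i, Ωb i i = 1)
    (α : Fin d → ℝ) (ν : ℝ) (hν : 0 < ν)
    (Z : Ω → (Fin d → ℝ)) (V : Ω → ℝ) (hZ : Measurable Z) (hV : Measurable V)
    (hZlaw : Measure.map Z ℙ = volume.withDensity
      (fun z => ENNReal.ofReal (2 * mvNormalPDF Ωb z * stdNormalCDF (α ⬝ᵥ z))))
    (hVlaw : Measure.map V ℙ = gammaMeasure (ν / 2) (ν / 2))
    (hindep : IndepFun V Z ℙ) :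
    Measure.map (fun ω => (Real.sqrt (V ω))⁻¹ • Z ω) ℙ
      = volume.withDensity (fun y => ENNReal.ofReal
          (2 * mvStudentPDF Ωb ν y *
            studentCDF (ν + d)
              ((α ⬝ᵥ y) * Real.sqrt ((ν + d) / ((y ⬝ᵥ Ωb⁻¹.mulVec y) + ν))))) := by
  have hpi := Real.pi_pos
  have hquad_cont : Continuous fun z : Fin d → ℝ => z ⬝ᵥ Ωb⁻¹.mulVec z := by
    simp only [dotProduct, Matrix.mulVec]
    fun_prop
  have halpha_cont : Continuous fun z : Fin d → ℝ => α ⬝ᵥ z := by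
    simp only [dotProduct]
    fun_prop
  have hCDF_meas : Measurable stdNormalCDF := by
    refine Monotone.measurable fun x y hxy => ?_
    exact ENNReal.toReal_mono (measure_ne_top _ _) (measure_mono (Set.Iic_subset_Iic.2 hxy))
  have hmvN_cont : Continuous (mvNormalPDF Ωb) := by
    unfold mvNormalPDF
    exact continuous_const.mul (Real.continuous_exp.comp ((hquad_cont.neg).div_const 2))
  have hδ_meas : Measurable fun z : Fin d → ℝ =>
      ENNReal.ofReal (2 * mvNormalPDF Ωb z * stdNormalCDF (α ⬝ᵥ z)) :=
    ENNReal.measurable_ofReal.comp (((continuous_const.mul hmvN_cont).measurable).mul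
      (hCDF_meas.comp halpha_cont.measurable))
  have hf_meas : Measurable fun p : ℝ × (Fin d → ℝ) => (Real.sqrt p.1)⁻¹ • p.2 := by
    fun_prop
  have hdet : 0 < Ωb.det := hΩ.det_pos
  have hQy : ∀ y : Fin d → ℝ, 0 ≤ y ⬝ᵥ Ωb⁻¹.mulVec y := fun y => by
    simpa using hΩ.inv.posSemidef.dotProduct_mulVec_nonneg y
  haveI : IsProbabilityMeasure (Measure.map Z ℙ) := Measure.isProbabilityMeasure_map hZ.aemeasurable
  have hpair : Measure.map (fun ω => (V ω, Z ω)) ℙ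
      = (Measure.map V ℙ).prod (Measure.map Z ℙ) :=
    (indepFun_iff_map_prod_eq_prod_map_map hV.aemeasurable hZ.aemeasurable).1 hindep
  have hcomp : Measure.map (fun ω => (Real.sqrt (V ω))⁻¹ • Z ω) ℙ
      = Measure.map (fun p : ℝ × (Fin d → ℝ) => (Real.sqrt p.1)⁻¹ • p.2)
          (Measure.map (fun ω => (V ω, Z ω)) ℙ) := by
    rw [Measure.map_map hf_meas (hV.prodMk hZ)]
    rfl
  have hgPDF_meas : Measurable (gammaPDF (ν/2) (ν/2)) :=
    ENNReal.measurable_ofReal.comp (measurable_gammaPDFReal _ _)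
  ext s hs
  have hH_meas : Measurable fun v : ℝ => (Measure.map Z ℙ)
      (Prod.mk v ⁻¹' ((fun p : ℝ × (Fin d → ℝ) => (Real.sqrt p.1)⁻¹ • p.2) ⁻¹' s)) :=
    measurable_measure_prodMk_left (hf_meas hs)
  rw [hcomp, hpair, Measure.map_apply hf_meas hs, Measure.prod_apply (hf_meas hs),
    withDensity_apply _ hs, hVlaw,
    show gammaMeasure (ν/2) (ν/2) = volume.withDensity (gammaPDF (ν/2) (ν/2)) from rfl,
    lintegral_withDensity_eq_lintegral_mul _ hgPDF_meas hH_meas]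
  simp only [Pi.mul_apply]
  rw [← lintegral_add_compl (fun v : ℝ => gammaPDF (ν/2) (ν/2) v * (Measure.map Z ℙ)
      (Prod.mk v ⁻¹' ((fun p : ℝ × (Fin d → ℝ) => (Real.sqrt p.1)⁻¹ • p.2) ⁻¹' s)))
      measurableSet_Ioi]
  have h0ae : ∀ᵐ v : ℝ ∂volume, v ≠ 0 := by
    have h0 : volume ({(0:ℝ)} : Set ℝ) = 0 := measure_singleton 0
    filter_upwards [compl_mem_ae_iff.mpr h0] with v hv
    simpa using hv
  have hcompl : (∫⁻ v in (Ioi (0:ℝ))ᶜ, gammaPDF (ν/2) (ν/2) v * (Measure.map Z ℙ)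
      (Prod.mk v ⁻¹' ((fun p : ℝ × (Fin d → ℝ) => (Real.sqrt p.1)⁻¹ • p.2) ⁻¹' s))) = 0 := by
    rw [Set.compl_Ioi, setLIntegral_congr_fun_ae measurableSet_Iic
      (g := fun _ => 0) ?_, lintegral_zero]
    filter_upwards [h0ae] with v hv0 hvI
    rw [gammaPDF_of_neg (lt_of_le_of_ne hvI hv0), zero_mul]
  rw [hcompl, add_zero]
  have hmain : ∀ v ∈ Ioi (0:ℝ), gammaPDF (ν/2) (ν/2) v * (Measure.map Z ℙ)
      (Prod.mk v ⁻¹' ((fun p : ℝ × (Fin d → ℝ) => (Real.sqrt p.1)⁻¹ • p.2) ⁻¹' s))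
      = ∫⁻ y in s, gammaPDF (ν/2) (ν/2) v * ENNReal.ofReal (Real.sqrt v ^ d) *
          ENNReal.ofReal (2 * mvNormalPDF Ωb (Real.sqrt v • y) *
            stdNormalCDF (α ⬝ᵥ (Real.sqrt v • y))) := by
    intro v hv
    have hv : (0:ℝ) < v := hv
    have hsv : 0 < Real.sqrt v := Real.sqrt_pos.2 hv
    have hpre : (Prod.mk v ⁻¹' ((fun p : ℝ × (Fin d → ℝ) => (Real.sqrt p.1)⁻¹ • p.2) ⁻¹' s))
        = (fun z : Fin d → ℝ => (Real.sqrt v)⁻¹ • z) ⁻¹' s := rfl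
    rw [hpre, hZlaw, withDensity_apply _ ((measurable_const_smul _) hs),
      lintegral_preimage_smul _ hδ_meas hsv hs, ← mul_assoc,
      ← lintegral_const_mul' (gammaPDF (ν/2) (ν/2) v * ENNReal.ofReal (Real.sqrt v ^ d)) _
        (ENNReal.mul_ne_top (by simp [gammaPDF]) ENNReal.ofReal_ne_top)]
  rw [setLIntegral_congr_fun_ae measurableSet_Ioi (Filter.Eventually.of_forall hmain)]
  have hswap_meas : AEMeasurable (Function.uncurry fun (v : ℝ) (y : Fin d → ℝ) =>
      gammaPDF (ν/2) (ν/2) v * ENNReal.ofReal (Real.sqrt v ^ d) *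
        ENNReal.ofReal (2 * mvNormalPDF Ωb (Real.sqrt v • y) *
          stdNormalCDF (α ⬝ᵥ (Real.sqrt v • y))))
      ((volume.restrict (Ioi (0:ℝ))).prod (volume.restrict s)) := by
    apply Measurable.aemeasurable
    have hsm : Measurable fun p : ℝ × (Fin d → ℝ) => Real.sqrt p.1 • p.2 :=
      ((Real.continuous_sqrt.comp continuous_fst).smul continuous_snd).measurable
    exact ((hgPDF_meas.comp measurable_fst).mul (ENNReal.measurable_ofReal.comp
      (((Real.continuous_sqrt.comp continuous_fst).pow d).measurable))).mul
      (hδ_meas.comp hsm)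
  rw [lintegral_lintegral_swap hswap_meas]
  refine setLIntegral_congr_fun_ae hs (Filter.Eventually.of_forall fun y _ => ?_)
  have hkey := key_lemma d (ν := ν) (Q := y ⬝ᵥ Ωb⁻¹.mulVec y) (a := α ⬝ᵥ y) (D := Ωb.det)
    hν (hQy y) hdet
  rw [show (2 * mvStudentPDF Ωb ν y * studentCDF (ν + ↑d)
        ((α ⬝ᵥ y) * Real.sqrt ((ν + ↑d) / ((y ⬝ᵥ Ωb⁻¹.mulVec y) + ν))))
      = (2 * (Real.Gamma ((ν + (d:ℝ))/2) /
            (Real.sqrt Ωb.det * (π*ν) ^ ((d:ℝ)/2) * Real.Gamma (ν/2)) *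
          (1 + (y ⬝ᵥ Ωb⁻¹.mulVec y)/ν) ^ (-(ν + (d:ℝ)) / 2)) *
          studentCDF (ν + (d:ℝ)) ((α ⬝ᵥ y) *
            Real.sqrt ((ν + (d:ℝ))/((y ⬝ᵥ Ωb⁻¹.mulVec y) + ν))))
      from by rw [mvStudentPDF], ← hkey]
  refine setLIntegral_congr_fun_ae measurableSet_Ioi
    (Filter.Eventually.of_forall fun v hv => ?_)
  have hv : (0:ℝ) < v := hv
  have hquadv : (Real.sqrt v • y) ⬝ᵥ Ωb⁻¹.mulVec (Real.sqrt v • y)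
      = v * (y ⬝ᵥ Ωb⁻¹.mulVec y) := by
    rw [Matrix.mulVec_smul, dotProduct_smul, smul_dotProduct, smul_eq_mul,
      smul_eq_mul, ← mul_assoc, Real.mul_self_sqrt hv.le]
  have halphav : α ⬝ᵥ (Real.sqrt v • y) = Real.sqrt v * (α ⬝ᵥ y) := by
    rw [dotProduct_smul, smul_eq_mul]
  rw [show gammaPDF (ν/2) (ν/2) v = ENNReal.ofReal (gammaPDFReal (ν/2) (ν/2) v) from rfl,
    show mvNormalPDF Ωb (Real.sqrt v • y) = (2*π) ^ (-(d:ℝ)/2) * Ωb.det ^ (-(1:ℝ)/2) *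
      Real.exp (-(v * (y ⬝ᵥ Ωb⁻¹.mulVec y))/2) from by rw [mvNormalPDF, hquadv],
    halphav, ← ENNReal.ofReal_mul (gammaPDFReal_nonneg (half_pos hν) (half_pos hν) v),
    ← ENNReal.ofReal_mul (mul_nonneg (gammaPDFReal_nonneg (half_pos hν) (half_pos hν) v)
      (pow_nonneg (Real.sqrt_nonneg v) d))]
  congr 1
  ring
end
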